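/- There exists a finite graph G and a threshold T ∈ [0,1] such that no action profile (hence no prediction) achieves full success in the collective risk dilemma when all agents play best responses: specifically, the graph with a hub node c adjacent to b, d, e, where b is also adjacent to a, d is also adjacent to f, and e is also adjacent to g, with T = 3/4, admits no best-response-consistent profile with full success. -/

import Mathlib

open Finset

/-- Threshold number of cooperators required in a group of size `M`: `⌈T·M⌉`. -/
noncomputable def thr (T : ℝ) (M : ℕ) : ℤ := ⌈T * (M : ℝ)⌉

/-- Defector's payoff in a group of size `M` with `k` cooperators. -/
noncomputable def piD (B r T : ℝ) (M k : ℕ) : ℝ :=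
  if thr T M ≤ (k : ℤ) then B else (1 - r) * B

variable {V : Type*} [Fintype V] [DecidableEq V]

/-- Number of cooperating neighbors of `i` (excluding `i` itself). -/
def coopNbrs (G : SimpleGraph V) [DecidableRel G.Adj] (a : V → Bool) (i : V) : ℕ :=
  ((G.neighborFinset i).filter (fun j => a j = true)).card

/-- Number of cooperators in `i`'s group (its neighbors together with `i` itself). -/
def coopCount (G : SimpleGraph V) [DecidableRel G.Adj] (a : V → Bool) (i : V) : ℕ :=
  coopNbrs G a i + (if a i then 1 else 0)

/-- Payoff of agent `i` under action profile `a` in the collective risk dilemma on `G`: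
defector's payoff of its group, minus the cost `c·B` if it cooperates. -/
noncomputable def payoff (G : SimpleGraph V) [DecidableRel G.Adj]
    (B r c T : ℝ) (a : V → Bool) (i : V) : ℝ :=
  piD B r T (G.degree i + 1) (coopCount G a i) - (if a i then c * B else 0)

/-- A strict Nash equilibrium: every unilateral deviation strictly decreases
the deviator's payoff. -/
noncomputable def strictNash (G : SimpleGraph V) [DecidableRel G.Adj]
    (B r c T : ℝ) (a : V → Bool) : Prop :=
  ∀ i, payoff G B r c T (Function.update a i (!a i)) i < payoff G B r c T a i

/-- Full success: every agent's group meets its cooperation threshold. -/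
def fullSuccess (G : SimpleGraph V) [DecidableRel G.Adj] (T : ℝ) (a : V → Bool) : Prop :=
  ∀ i, thr T (G.degree i + 1) ≤ (coopCount G a i : ℤ)

/-- The edges of the hub counter-example graph on vertices
`a,b,c,d,e,f,g = 0,1,2,3,4,5,6`: `{a,b}, {b,c}, {c,d}, {c,e}, {d,f}, {e,g}`. -/
def hubEdges : List (Fin 7 × Fin 7) := [(0, 1), (1, 2), (2, 3), (2, 4), (3, 5), (4, 6)]

/-- The hub counter-example graph: hub `c = 2` adjacent to `b = 1`, `d = 3`, `e = 4`;
`b` also adjacent to `a = 0`, `d` to `f = 5`, `e` to `g = 6`. -/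
def hubG : SimpleGraph (Fin 7) where
  Adj i j := i ≠ j ∧ ((i, j) ∈ hubEdges ∨ (j, i) ∈ hubEdges)
  symm := by constructor; intro i j h; exact ⟨Ne.symm h.1, Or.symm h.2⟩
  loopless := by constructor; intro i h; exact h.1 rfl

instance : DecidableRel hubG.Adj := fun i j =>
  inferInstanceAs (Decidable (i ≠ j ∧ ((i, j) ∈ hubEdges ∨ (j, i) ∈ hubEdges)))

/-- Best-response-consistent profile: each agent cooperates iff exactly
`⌈T·M_i⌉ - 1` of its neighbors cooperate (the unique best response when `c < r`). -/
def brConsistent (G : SimpleGraph V) [DecidableRel G.Adj] (T : ℝ) (a : V → Bool) : Prop :=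
  ∀ i, a i = true ↔ (coopNbrs G a i : ℤ) = thr T (G.degree i + 1) - 1

/-- Required cooperators per group on the hub graph. -/
def reqF : Fin 7 → ℕ := ![2, 3, 3, 3, 3, 2, 2]

/-- Target number of cooperating neighbors per vertex. -/
def tgtF : Fin 7 → ℕ := ![1, 2, 2, 2, 2, 1, 1]

set_option maxRecDepth 100000 in
lemma hub_key : ∀ a : Fin 7 → Bool,
    ¬ ((∀ i, a i = true ↔ coopNbrs hubG a i = tgtF i) ∧
       (∀ i, reqF i ≤ coopCount hubG a i)) := by decide

lemma thr2 : thr (3 / 4 : ℝ) 2 = 2 := by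
  simp only [thr]; rw [show ((2:ℕ):ℝ) = 2 by norm_num, Int.ceil_eq_iff] <;> norm_num

lemma thr3 : thr (3 / 4 : ℝ) 3 = 3 := by
  simp only [thr]; rw [show ((3:ℕ):ℝ) = 3 by norm_num, Int.ceil_eq_iff] <;> norm_num

lemma thr4 : thr (3 / 4 : ℝ) 4 = 3 := by
  simp only [thr]; rw [show ((4:ℕ):ℝ) = 4 by norm_num, Int.ceil_eq_iff] <;> norm_num

lemma hthr (i : Fin 7) : thr (3 / 4 : ℝ) (hubG.degree i + 1) = reqF i := by
  have hd : ∀ j : Fin 7, hubG.degree j + 1 = (![2, 3, 4, 3, 3, 2, 2] : Fin 7 → ℕ) j := by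
    decide
  rw [hd i]
  fin_cases i <;> first | exact thr2 | exact thr3 | exact thr4

/-- on the hub counter-example graph with `T = 3/4`, no action profile
is simultaneously best-response-consistent for all agents and fully successful. -/
theorem hub_counterexample_no_fullSuccess (T : ℝ) (hT : T = 3 / 4) :
    ¬ ∃ a : Fin 7 → Bool, brConsistent hubG T a ∧ fullSuccess hubG T a := by
  subst hT
  rintro ⟨a, hbr, hfs⟩
  refine hub_key a ⟨fun i => ?_, fun i => ?_⟩
  · have h := hbr i
    rw [hthr i] at h
    rw [h]
    have hrt : ∀ j : Fin 7, tgtF j + 1 = reqF j := by decide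
    have gen : ∀ (n r t : ℕ), t + 1 = r → (((n : ℤ) = (r : ℤ) - 1) ↔ n = t) := by
      intros; omega
    exact gen _ _ _ (hrt i)
  · have h := hfs i
    rw [hthr i] at h
    exact_mod_cast h
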